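/- For all integers r ≥ 0 and 0 ≤ k < N, one has |δ_{r,k}| ≤ 2^{−rb} and |γ_{r,k}| ≤ 2^{−r(b−2)}. -/

import Mathlib

/-- Generalized binomial coefficient `C(x, r) = x (x-1) ⋯ (x-r+1) / r!`. -/
noncomputable def gbc (x : ℝ) (r : ℕ) : ℝ :=
  (∏ j ∈ Finset.range r, (x - j)) / (r.factorial : ℝ)

/-- `δ_{r,k} = C(k/N, r) (-2^(-b))^r`. -/
noncomputable def deltaC (b N r k : ℕ) : ℝ :=
  gbc ((k : ℝ) / N) r * (-(2:ℝ) ^ (-(b:ℤ))) ^ r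

/-- `γ_{0,k} = 1` and `γ_{r,k} = (-k/(rN)) C(-(k+r)/N - 1, r-1) (-2^(-b))^r` for `r ≥ 1`. -/
noncomputable def gammaC (b N r k : ℕ) : ℝ :=
  if r = 0 then 1
  else (-(k : ℝ) / (r * N)) * gbc (-((k : ℝ) + r) / N - 1) (r - 1) * (-(2:ℝ) ^ (-(b:ℤ))) ^ r

/-!
Both bounds reduce to bounds on generalized binomial coefficients, since
`|(-2^(-b))^r| = 2^(-rb)`. For `|x| ≤ 1` every factor satisfies `|x - j| ≤ j + 1`, so
`|C(x, r)| ≤ r!/r! = 1`; this gives the bound on `δ`. For `γ`, upper negation turns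
`C(-x-1, n)` with `0 ≤ x ≤ m` into `±C(x+n, n)`, at most `C(m+n, n) ≤ 2^(m+n)`; with
`x = (k+r)/N ≤ r + 1`, `n = r - 1` and the prefactor `k/(rN) ≤ 1` this is at most `4^r`,
which is absorbed into `2^(-r(b-2))`.
-/

lemma abs_gbc_le_one {x : ℝ} (hx : |x| ≤ 1) (r : ℕ) : |gbc x r| ≤ 1 := by
  have hfac : (0 : ℝ) < r.factorial := by exact_mod_cast r.factorial_pos
  rw [gbc, abs_div, abs_of_pos hfac, div_le_one hfac, Finset.abs_prod,
    ← Finset.prod_range_add_one_eq_factorial, Nat.cast_prod]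
  gcongr with j
  push_cast
  calc |x - j| ≤ |x| + |(j : ℝ)| := abs_sub _ _
    _ ≤ 1 + j := by rw [Nat.abs_cast]; linarith
    _ = j + 1 := add_comm _ _

lemma abs_gbc_neg_sub_one_le_choose {x : ℝ} {m : ℕ} (hx0 : 0 ≤ x) (hxm : x ≤ m) (n : ℕ) :
    |gbc (-x - 1) n| ≤ (m + n).choose n := by
  have hfac : (0 : ℝ) < n.factorial := by exact_mod_cast n.factorial_pos
  have hchoose :
      ((m + n).choose n : ℝ) = (∏ j ∈ Finset.range n, ((m : ℝ) + 1 + j)) / n.factorial := by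
    rw [eq_div_iff hfac.ne', mul_comm]
    exact_mod_cast (Nat.ascFactorial_eq_prod_range (m + 1) n ▸
      Nat.ascFactorial_eq_factorial_mul_choose m n).symm
  rw [hchoose, gbc, abs_div, abs_of_pos hfac, Finset.abs_prod]
  gcongr with j
  rw [abs_le]
  constructor <;> linarith [(Nat.cast_nonneg j : (0 : ℝ) ≤ j)]

lemma abs_neg_two_zpow_neg_pow (b r : ℕ) :
    |(-(2 : ℝ) ^ (-(b : ℤ))) ^ r| = 2 ^ (-((r : ℤ) * b)) := by
  rw [abs_pow, abs_neg, abs_of_pos (by positivity), ← zpow_natCast, ← zpow_mul, neg_mul,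
    mul_comm]

lemma abs_deltaC_le (b : ℕ) {N k : ℕ} (hk : k < N) (r : ℕ) :
    |deltaC b N r k| ≤ 2 ^ (-((r : ℤ) * b)) := by
  have hx : |(k : ℝ) / N| ≤ 1 := by
    have hN : (0 : ℝ) < N := by exact_mod_cast k.zero_le.trans_lt hk
    rw [abs_of_nonneg (by positivity), div_le_one hN]
    exact_mod_cast hk.le
  rw [deltaC, abs_mul, abs_neg_two_zpow_neg_pow]
  exact mul_le_of_le_one_left (by positivity) (abs_gbc_le_one hx r)

lemma abs_gammaC_le (b : ℕ) {N k : ℕ} (hk : k < N) (r : ℕ) :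
    |gammaC b N r k| ≤ 2 ^ (-((r : ℤ) * ((b : ℤ) - 2))) := by
  obtain rfl | ⟨n, rfl⟩ : r = 0 ∨ ∃ n, r = n + 1 := by cases r <;> simp
  · simp [gammaC]
  have hN1 : (1 : ℝ) ≤ N := by exact_mod_cast k.zero_le.trans_lt hk
  have hN : (0 : ℝ) < N := by linarith
  have hkN : (k : ℝ) < N := by exact_mod_cast hk
  have hprefactor : |-(k : ℝ) / ((n + 1 : ℕ) * N)| ≤ 1 := by
    rw [abs_div, abs_neg, Nat.abs_cast, abs_of_pos (by positivity), div_le_one (by positivity)]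
    push_cast
    nlinarith
  have hx : ((k : ℝ) + (n + 1 : ℕ)) / N ≤ (n + 2 : ℕ) := by
    rw [div_le_iff₀ hN]
    push_cast
    nlinarith
  have hbinom : |gbc (-((k : ℝ) + (n + 1 : ℕ)) / N - 1) n| ≤ 4 ^ (n + 1) := by
    rw [neg_div]
    calc _ ≤ ((n + 2 + n).choose n : ℝ) := abs_gbc_neg_sub_one_le_choose (by positivity) hx n
      _ ≤ 2 ^ (2 * (n + 1)) := by
          exact_mod_cast (Nat.choose_le_two_pow _ _).trans_eq (by ring_nf)
      _ = 4 ^ (n + 1) := by rw [pow_mul]; norm_num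
  rw [gammaC, if_neg n.succ_ne_zero, Nat.add_sub_cancel, abs_mul, abs_mul,
    abs_neg_two_zpow_neg_pow]
  calc _ ≤ 1 * 4 ^ (n + 1) * (2 : ℝ) ^ (-(((n + 1 : ℕ) : ℤ) * b)) := by gcongr
    _ = 2 ^ (-(((n + 1 : ℕ) : ℤ) * ((b : ℤ) - 2))) := by
        rw [one_mul, show (4 : ℝ) ^ (n + 1) = 2 ^ (((n + 1 : ℕ) : ℤ) * 2) by
          rw [mul_comm, zpow_mul, zpow_natCast]; norm_num, ← zpow_add₀ two_ne_zero]
        ring_nf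

theorem gamma_delta_coeff_bounds_general (b N : ℕ)
    (r k : ℕ) (hk : k < N) :
    |deltaC b N r k| ≤ (2:ℝ) ^ (-((r : ℤ) * b)) ∧
    |gammaC b N r k| ≤ (2:ℝ) ^ (-((r : ℤ) * ((b : ℤ) - 2))) :=
  ⟨abs_deltaC_le b hk r, abs_gammaC_le b hk r⟩

/-- for `r ≥ 0` and `0 ≤ k < N`, `|δ_{r,k}| ≤ 2^(-rb)` and
`|γ_{r,k}| ≤ 2^(-r(b-2))`. -/
theorem gamma_delta_coeff_bounds (b N : ℕ) (hb : 4 ≤ b) (hN : 3 ≤ N)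
    (r k : ℕ) (hk : k < N) :
    |deltaC b N r k| ≤ (2:ℝ) ^ (-((r : ℤ) * b)) ∧
    |gammaC b N r k| ≤ (2:ℝ) ^ (-((r : ℤ) * ((b : ℤ) - 2))) :=
  gamma_delta_coeff_bounds_general b N r k hk
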